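/- arXiv:2604.12233 — 3 statements merged into one kernel-verified Lean document; each statement's English description precedes it below -/
import Mathlib

section
/- Let v ∈ ℝ^n with ‖v‖₂ = 1, let q be uniformly distributed over vectors in {0,1}^n with exactly d ones (1 ≤ d ≤ n, n ≥ 2), let p = d/n, and let f(q) = ⟨q, v⟩ with μ = E f(q). Then Var f(q) = p(1−p)·(1 − (μ²/p² − 1)/(n−1)). -/
/-!
Write `f q = ∑ i ∈ q, v i`. Both moments of `f` only see how many `d`-subsets contain a given
index or a given pair of distinct indices, namely `C(n,d) * p` and `C(n,d) * r` with
`r = d(d-1)/(n(n-1))`. Hence `E f = p ∑ v i` and `E f² = r (∑ v i)² + (p - r) ‖v‖²`, and the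
formula is `E f² - μ²` rewritten using `r - p² = -p(1-p)/(n-1)`.
-/

open Finset

theorem Finset.card_filter_powersetCard_superset_mul_choose {α : Type*} [DecidableEq α]
    {s t : Finset α} (hst : s ⊆ t) (n : ℕ) :
    #{u ∈ t.powersetCard n | s ⊆ u} * (#t).choose #s = (#t).choose n * n.choose #s := by
  by_cases hsn : #s ≤ n
  · rw [card_filter_powersetCard_subset s t n hst hsn, Nat.choose_mul hsn, mul_comm]
  · rw [Nat.choose_eq_zero_of_lt (not_le.1 hsn), mul_zero, mul_eq_zero, card_eq_zero,
      filter_eq_empty_iff]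
    exact .inl fun u hu hsu => hsn ((card_le_card hsu).trans_eq (mem_powersetCard.1 hu).2)

theorem Finset.sum_sum_eq_sum_card_filter_mul {α β R : Type*} [Fintype β] [DecidableEq β]
    [CommSemiring R] (P : Finset α) (F : α → Finset β) (g : β → R) :
    ∑ a ∈ P, ∑ b ∈ F a, g b = ∑ b, #{a ∈ P | b ∈ F a} * g b := by
  calc ∑ a ∈ P, ∑ b ∈ F a, g b = ∑ a ∈ P, ∑ b, if b ∈ F a then g b else 0 := by
        simp only [sum_ite_mem, univ_inter]
    _ = ∑ b, ∑ a ∈ P, if b ∈ F a then g b else 0 := sum_comm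
    _ = ∑ b, #{a ∈ P | b ∈ F a} * g b := by simp only [← sum_filter, sum_const, nsmul_eq_mul]

theorem Finset.sum_sub_average_sq_div_card {α : Type*} (s : Finset α) (f : α → ℝ) :
    (∑ x ∈ s, (f x - (∑ y ∈ s, f y) / #s) ^ 2) / #s
      = (∑ x ∈ s, f x ^ 2) / #s - ((∑ x ∈ s, f x) / #s) ^ 2 := by
  rcases s.eq_empty_or_nonempty with rfl | hs
  · simp
  have : (#s : ℝ) ≠ 0 := by exact_mod_cast hs.card_ne_zero
  simp only [sub_sq, sum_add_distrib, sum_sub_distrib, ← sum_mul, ← mul_sum, sum_const,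
    nsmul_eq_mul]
  field_simp
  ring

section UniformSubset

variable {ι : Type*} [Fintype ι] [DecidableEq ι] (d : ℕ)

theorem Finset.card_filter_superset_powersetCard_univ (t : Finset ι) :
    (#{s ∈ univ.powersetCard d | t ⊆ s} : ℝ)
      = (Fintype.card ι).choose d * d.choose #t / (Fintype.card ι).choose #t := by
  have hpos : 0 < (Fintype.card ι).choose #t := Nat.choose_pos (card_le_univ t)
  rw [eq_div_iff (by positivity)]
  exact_mod_cast card_filter_powersetCard_superset_mul_choose (subset_univ t) d

theorem Finset.card_filter_mem_powersetCard_univ (i : ι) :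
    (#{s ∈ univ.powersetCard d | i ∈ s} : ℝ)
      = (Fintype.card ι).choose d * (d / Fintype.card ι) := by
  simpa [mul_div_assoc] using card_filter_superset_powersetCard_univ d {i}

theorem Finset.card_filter_mem_and_mem_powersetCard_univ {i j : ι} (hij : i ≠ j) :
    (#{s ∈ univ.powersetCard d | i ∈ s ∧ j ∈ s} : ℝ)
      = (Fintype.card ι).choose d * (d * (d - 1) / (Fintype.card ι * (Fintype.card ι - 1))) := by
  have h := card_filter_superset_powersetCard_univ d {i, j}
  rw [card_pair hij, Nat.cast_choose_two, Nat.cast_choose_two] at h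
  simp only [insert_subset_iff, singleton_subset_iff] at h
  rw [h]
  field_simp

theorem Finset.sum_powersetCard_univ_sum (v : ι → ℝ) :
    ∑ s ∈ univ.powersetCard d, ∑ i ∈ s, v i
      = (Fintype.card ι).choose d * (d / Fintype.card ι) * ∑ i, v i := by
  simp only [sum_sum_eq_sum_card_filter_mul, card_filter_mem_powersetCard_univ, mul_sum]

theorem Finset.sum_powersetCard_univ_sum_sq (v : ι → ℝ) :
    ∑ s ∈ univ.powersetCard d, (∑ i ∈ s, v i) ^ 2
      = (Fintype.card ι).choose d *
        (d * (d - 1) / (Fintype.card ι * (Fintype.card ι - 1)) * (∑ i, v i) ^ 2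
          + (d / Fintype.card ι - d * (d - 1) / (Fintype.card ι * (Fintype.card ι - 1)))
            * ∑ i, v i ^ 2) := by
  set C : ℝ := ↑((Fintype.card ι).choose d)
  set p : ℝ := d / Fintype.card ι
  set r : ℝ := d * (d - 1) / (Fintype.card ι * (Fintype.card ι - 1))
  have hcount (i j : ι) :
      (#{s ∈ univ.powersetCard d | (i, j) ∈ s ×ˢ s} : ℝ)
        = C * (r + if i = j then p - r else 0) := by
    rcases eq_or_ne i j with rfl | hij
    · simp [card_filter_mem_powersetCard_univ, C, p]
    · simp [card_filter_mem_and_mem_powersetCard_univ d hij, hij, C, r]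
  calc ∑ s ∈ univ.powersetCard d, (∑ i ∈ s, v i) ^ 2
        = ∑ s ∈ univ.powersetCard d, ∑ x ∈ s ×ˢ s, v x.1 * v x.2 := by
          simp only [sq, sum_mul_sum, sum_product]
      _ = ∑ i, ∑ j, C * (r + if i = j then p - r else 0) * (v i * v j) := by
          rw [sum_sum_eq_sum_card_filter_mul, Fintype.sum_prod_type]
          simp only [hcount]
      _ = C * (r * (∑ i, v i) ^ 2 + (p - r) * ∑ i, v i ^ 2) := by
          rw [sq, sum_mul_sum]
          simp only [mul_add, add_mul, sum_add_distrib, mul_ite, ite_mul, mul_zero, zero_mul,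
            sum_ite_eq, mem_univ, if_true, mul_sum, ← sq, mul_assoc]

end UniformSubset

theorem stmt5 {n d : ℕ} (hd1 : 1 ≤ d) (hdn : d ≤ n) (hn : 2 ≤ n)
    (v : Fin n → ℝ) (hv : ∑ i, v i ^ 2 = 1) :
    let Ω := {s : Finset (Fin n) // s.card = d}
    let p : ℝ := (d:ℝ) / n
    let f : Ω → ℝ := fun s => ∑ i, (if i ∈ s.1 then v i else 0)
    let μ : ℝ := (∑ s : Ω, f s) / (Fintype.card Ω : ℝ)
    (∑ s : Ω, (f s - μ)^2) / (Fintype.card Ω : ℝ)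
      = p * (1 - p) * (1 - (μ^2 / p^2 - 1) / ((n:ℝ) - 1)) := by
  intro Ω p f μ
  have hsum (g : Finset (Fin n) → ℝ) : ∑ s : Ω, g s.1 = ∑ s ∈ univ.powersetCard d, g s :=
    (sum_subtype _ (fun _ => mem_powersetCard_univ) g).symm
  have hf (s : Ω) : f s = ∑ i ∈ s.1, v i := by simp [f, sum_ite_mem]
  have hcard : (Fintype.card Ω : ℝ) = n.choose d := by simp [Ω]
  have hC : (n.choose d : ℝ) ≠ 0 := by exact_mod_cast (Nat.choose_pos hdn).ne'
  have hμ : μ = p * ∑ i, v i := by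
    simp only [μ, p, hf, hsum (fun s => ∑ i ∈ s, v i), sum_powersetCard_univ_sum, hcard,
      Fintype.card_fin]
    field_simp
  have hvar : (∑ s : Ω, (f s - μ) ^ 2) / Fintype.card Ω
      = (∑ s : Ω, f s ^ 2) / Fintype.card Ω - μ ^ 2 := by
    simpa only [card_univ] using sum_sub_average_sq_div_card univ f
  have hd0 : (d : ℝ) ≠ 0 := Nat.cast_ne_zero.2 (by omega)
  have hn0 : (n : ℝ) - 1 ≠ 0 := by
    have : (2 : ℝ) ≤ n := by exact_mod_cast hn
    linarith
  rw [hvar, hμ]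
  simp only [hf, hsum (fun s => (∑ i ∈ s, v i) ^ 2), sum_powersetCard_univ_sum_sq, hcard,
    Fintype.card_fin, hv, p]
  field_simp
  ring
end

section
/- Let M be a random matrix whose rows X_1^T, …, X_n^T are i.i.d. uniform over 0/1 vectors in ℝ^n with exactly d ones (1 ≤ d ≤ n). Let H_1 = span{X_2,…,X_n} and let f_1 be any unit vector orthogonal to H_1 (measurable with respect to X_2,…,X_n). Then E[⟨X_1, f_1⟩² | X_2,…,X_n] = (d/n)·(n−d)/(n−1) + (d(d−1)/(n(n−1)))·(Σ_{k=1}^n f_1(k))². -/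
/-!
Expanding the square, the average of `(∑ k ∈ s, f k) ^ 2` over `d`-subsets `s` of an `n`-set is
`∑ k, ∑ l, f k * f l * P(k, l ∈ s)`. The `d`-subsets containing a fixed set `A` satisfy
`#{s | A ⊆ s} * (n choose #A) = (n choose d) * (d choose #A)`, so a point lies in `s` with
probability `d / n` and two distinct points with probability `d (d - 1) / (n (n - 1))`. The diagonal
contributes `(d / n - d (d - 1) / (n (n - 1))) * ∑ k, f k ^ 2`, which is the first term since
`f` is a unit vector.
-/

open Finset

section

variable {α : Type*} [DecidableEq α]

theorem card_filter_powersetCard_subset_mul_choose (A t : Finset α) (d : ℕ) (hA : A ⊆ t) :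
    #{s ∈ t.powersetCard d | A ⊆ s} * (#t).choose #A = (#t).choose d * d.choose #A := by
  rcases le_or_gt #A d with hAd | hdA
  · rw [card_filter_powersetCard_subset A t d hA hAd, Nat.choose_mul hAd, mul_comm]
  · have hempty : {s ∈ t.powersetCard d | A ⊆ s} = ∅ :=
      filter_false_of_mem fun s hs hAs =>
        (card_le_card hAs).not_gt ((mem_powersetCard.1 hs).2 ▸ hdA)
    rw [hempty, Nat.choose_eq_zero_of_lt hdA]
    simp

variable [Fintype α]

theorem cast_card_filter_powersetCard_univ_subset {K : Type*} [Field K] [CharZero K]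
    (A : Finset α) (d : ℕ) :
    (#{s ∈ powersetCard d univ | A ⊆ s} : K)
      = (Fintype.card α).choose d * d.choose #A / (Fintype.card α).choose #A := by
  have hpos : 0 < (Fintype.card α).choose #A := Nat.choose_pos (card_le_univ A)
  have hcount := card_filter_powersetCard_subset_mul_choose A univ d (subset_univ A)
  rw [card_univ] at hcount
  rw [eq_div_iff (Nat.cast_ne_zero.2 hpos.ne')]
  exact_mod_cast hcount

theorem cast_card_filter_powersetCard_univ_mem_mem {K : Type*} [Field K] [CharZero K]
    (d : ℕ) (k l : α) :
    (#{s ∈ powersetCard d univ | k ∈ s ∧ l ∈ s} : K)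
      = (if k = l then (d : K) / Fintype.card α
          else (d : K) * (d - 1) / (Fintype.card α * (Fintype.card α - 1)))
        * (Fintype.card α).choose d := by
  split_ifs with hkl
  · subst hkl
    have hsingle := cast_card_filter_powersetCard_univ_subset (K := K) {k} d
    simp only [singleton_subset_iff, card_singleton, Nat.choose_one_right] at hsingle
    simp only [and_self, hsingle]
    ring
  · have hpair := cast_card_filter_powersetCard_univ_subset (K := K) {k, l} d
    simp only [insert_subset_iff, singleton_subset_iff, card_pair hkl, Nat.cast_choose_two] at hpair
    rw [hpair]
    have hcard : 2 ≤ Fintype.card α := card_pair hkl ▸ card_le_univ {k, l}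
    have hcard_sub_one : (Fintype.card α : K) - 1 ≠ 0 :=
      sub_ne_zero.2 (by exact_mod_cast (by omega : Fintype.card α ≠ 1))
    field_simp

theorem sum_sq_sum_eq_sum_sum_mul_card {R : Type*} [CommSemiring R]
    (𝒜 : Finset (Finset α)) (f : α → R) :
    ∑ s ∈ 𝒜, (∑ k ∈ s, f k) ^ 2 = ∑ k, ∑ l, f k * f l * #{s ∈ 𝒜 | k ∈ s ∧ l ∈ s} := by
  calc ∑ s ∈ 𝒜, (∑ k ∈ s, f k) ^ 2
      = ∑ s ∈ 𝒜, ∑ k, ∑ l, if k ∈ s ∧ l ∈ s then f k * f l else 0 :=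
        sum_congr rfl fun s _ => by simp [ite_and, sq, sum_mul_sum]
    _ = ∑ k, ∑ l, ∑ s ∈ 𝒜, if k ∈ s ∧ l ∈ s then f k * f l else 0 := by
        rw [sum_comm]; exact sum_congr rfl fun k _ => sum_comm
    _ = ∑ k, ∑ l, f k * f l * #{s ∈ 𝒜 | k ∈ s ∧ l ∈ s} := by
        simp_rw [natCast_card_filter, mul_sum, mul_ite, mul_one, mul_zero]

theorem sum_sum_mul_mul_ite_eq {R : Type*} [CommRing R] (f : α → R) (a b : R) :
    ∑ k, ∑ l, f k * f l * (if k = l then a else b)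
      = b * (∑ k, f k) ^ 2 + (a - b) * ∑ k, f k ^ 2 := by
  have hsplit : ∀ k l, f k * f l * (if k = l then a else b)
      = b * (f k * f l) + if k = l then (a - b) * f k ^ 2 else 0 := by
    intro k l
    split_ifs with h
    · subst h; ring
    · ring
  simp_rw [hsplit, sum_add_distrib, sum_ite_eq, mem_univ, if_true, ← mul_sum]
  rw [sq (∑ k, f k), sum_mul_sum]
  simp_rw [mul_sum]

end

theorem stmt13_general {n d : ℕ} (hdn : d ≤ n) (hn : 2 ≤ n)
    (f : Fin n → ℝ) (hf : ∑ k, f k ^ 2 = 1) :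
    (∑ s : {s : Finset (Fin n) // s.card = d},
        (∑ k, (if k ∈ s.1 then (1:ℝ) else 0) * f k)^2) /
      (Fintype.card {s : Finset (Fin n) // s.card = d} : ℝ)
      = ((d:ℝ) / n) * (((n:ℝ) - d) / ((n:ℝ) - 1))
        + ((d:ℝ) * ((d:ℝ) - 1) / ((n:ℝ) * ((n:ℝ) - 1))) * (∑ k, f k)^2 := by
  have hsum : ∑ s : {s : Finset (Fin n) // s.card = d},
        (∑ k, (if k ∈ s.1 then (1:ℝ) else 0) * f k) ^ 2
      = ∑ s ∈ powersetCard d univ, (∑ k ∈ s, f k) ^ 2 := by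
    simp only [ite_mul, one_mul, zero_mul, sum_ite_mem, univ_inter]
    exact (sum_subtype _ (fun _ => mem_powersetCard_univ) fun s => (∑ k ∈ s, f k) ^ 2).symm
  rw [hsum, Fintype.card_finset_len, Fintype.card_fin, sum_sq_sum_eq_sum_sum_mul_card]
  simp_rw [cast_card_filter_powersetCard_univ_mem_mem, Fintype.card_fin, ← mul_assoc, ← sum_mul,
    sum_sum_mul_mul_ite_eq, hf]
  have hchoose : 0 < n.choose d := Nat.choose_pos hdn
  have hn1 : (n : ℝ) - 1 ≠ 0 := by
    have : (2 : ℝ) ≤ n := by exact_mod_cast hn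
    linarith
  field_simp
  ring

theorem stmt13 {n d : ℕ} (hd1 : 1 ≤ d) (hdn : d ≤ n) (hn : 2 ≤ n)
    (f : Fin n → ℝ) (hf : ∑ k, f k ^ 2 = 1) :
    (∑ s : {s : Finset (Fin n) // s.card = d},
        (∑ k, (if k ∈ s.1 then (1:ℝ) else 0) * f k)^2) /
      (Fintype.card {s : Finset (Fin n) // s.card = d} : ℝ)
      = ((d:ℝ) / n) * (((n:ℝ) - d) / ((n:ℝ) - 1))
        + ((d:ℝ) * ((d:ℝ) - 1) / ((n:ℝ) * ((n:ℝ) - 1))) * (∑ k, f k)^2 :=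
  stmt13_general hdn hn f hf
end

section
/- Let δ, ρ ∈ (0,1) and let v ∈ S^{n−1} be a unit vector that is not (δ, ρ)-almost constant, meaning: for every λ ∈ ℝ, the number of coordinates i with |v_i − λ| ≤ ρ/√n is less than (1−δ)n. Let D(v) ∈ ℝ^{n(n−1)/2} be the vector with coordinates v_i − v_j for i < j. Then ‖D(v)‖₂ ≥ δρ√n/(4√2). -/
/-!
Fix `j`. Applied with `λ = v j`, the hypothesis says that more than `δ n` coordinates `v i` lie
farther than `ρ / √n` from `v j`, so `∑ i, (v i - v j) ^ 2 ≥ δ ρ ^ 2`. Summing over `j` counts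
every pair `i < j` twice, hence `∑_{i<j} (v i - v j) ^ 2 ≥ δ ρ ^ 2 n / 2`, which is more than
`(δ ρ √n / (4 √2)) ^ 2` since `δ < 1`.
-/

open Finset

lemma two_nsmul_sum_filter_fst_lt {ι M : Type*} [Fintype ι] [LinearOrder ι] [AddCommMonoid M]
    (g : ι × ι → M) (hswap : ∀ p, g p.swap = g p) (hdiag : ∀ i, g (i, i) = 0) :
    2 • ∑ p ∈ univ.filter (fun p : ι × ι => p.1 < p.2), g p = ∑ p, g p := by
  have hsplit : ∀ p : ι × ι,
      g p = (if p.1 < p.2 then g p else 0) + (if p.2 < p.1 then g p else 0) := by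
    rintro ⟨i, j⟩
    rcases lt_trichotomy i j with h | rfl | h
    · simp [h, h.not_gt]
    · simp [hdiag]
    · simp [h, h.not_gt]
  have hmirror : ∑ p ∈ univ.filter (fun p : ι × ι => p.2 < p.1), g p
      = ∑ p ∈ univ.filter (fun p : ι × ι => p.1 < p.2), g p :=
    sum_equiv (Equiv.prodComm ι ι) (by simp) (fun p _ => (hswap p).symm)
  calc 2 • ∑ p ∈ univ.filter (fun p : ι × ι => p.1 < p.2), g p
      = ∑ p ∈ univ.filter (fun p : ι × ι => p.1 < p.2), g p
        + ∑ p ∈ univ.filter (fun p : ι × ι => p.2 < p.1), g p := by rw [hmirror, two_nsmul]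
    _ = ∑ p, g p := by
        rw [sum_filter, sum_filter, ← sum_add_distrib]
        exact sum_congr rfl fun p _ => (hsplit p).symm

lemma mul_card_mul_sq_le_sum_sq_sub {ι : Type*} [Fintype ι] (x : ι → ℝ) (c r δ : ℝ)
    (hr : 0 ≤ r)
    (hnear : ((univ.filter (fun i => |x i - c| ≤ r)).card : ℝ) < (1 - δ) * Fintype.card ι) :
    δ * Fintype.card ι * r ^ 2 ≤ ∑ i, (x i - c) ^ 2 := by
  set far := univ.filter (fun i => ¬ |x i - c| ≤ r)
  have hcard : ((univ.filter (fun i => |x i - c| ≤ r)).card : ℝ) + far.card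
      = Fintype.card ι := by
    exact_mod_cast card_filter_add_card_filter_not (s := univ) _
  have hfar : ∀ i ∈ far, r ^ 2 ≤ (x i - c) ^ 2 := by
    intro i hi
    have hlt : r < |x i - c| := not_le.1 (mem_filter.1 hi).2
    rw [← sq_abs (x i - c)]
    exact pow_le_pow_left₀ hr hlt.le 2
  calc δ * Fintype.card ι * r ^ 2 ≤ far.card * r ^ 2 := by
        gcongr
        linarith
    _ = ∑ i ∈ far, r ^ 2 := by rw [sum_const, nsmul_eq_mul]
    _ ≤ ∑ i ∈ far, (x i - c) ^ 2 := sum_le_sum hfar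
    _ ≤ ∑ i, (x i - c) ^ 2 :=
        sum_le_sum_of_subset_of_nonneg (subset_univ _) (fun i _ _ => sq_nonneg _)

theorem stmt18_general {n : ℕ} (δ ρ : ℝ) (hδ : δ ∈ Set.Ioo (0:ℝ) 1) (hρ : ρ ∈ Set.Ioo (0:ℝ) 1)
    (v : EuclideanSpace ℝ (Fin n))
    (hcons : ∀ lam : ℝ,
      ((Finset.univ.filter (fun i : Fin n => |v i - lam| ≤ ρ / Real.sqrt n)).card : ℝ)
        < (1 - δ) * n) :
    δ * ρ * Real.sqrt n / (4 * Real.sqrt 2)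
      ≤ Real.sqrt (∑ p ∈ Finset.univ.filter (fun p : Fin n × Fin n => p.1 < p.2),
          (v p.1 - v p.2)^2) := by
  obtain ⟨hδ0, hδ1⟩ := hδ
  obtain ⟨hρ0, -⟩ := hρ
  set S := ∑ p ∈ univ.filter (fun p : Fin n × Fin n => p.1 < p.2), (v p.1 - v p.2) ^ 2
  -- `n / n` rather than `1`: it is `0` for `n = 0`, so no case split on `n` is needed.
  have hrow : ∀ j, δ * ρ ^ 2 * (n / n) ≤ ∑ i, (v i - v j) ^ 2 := fun j => by
    have h := mul_card_mul_sq_le_sum_sq_sub (fun i => v i) (v j) (ρ / √n) δ (by positivity)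
      (by simpa using hcons (v j))
    rwa [Fintype.card_fin, div_pow, Real.sq_sqrt n.cast_nonneg, mul_assoc, mul_div_left_comm,
      ← mul_assoc] at h
  have hpairs : 2 * S = ∑ j : Fin n, ∑ i : Fin n, (v i - v j) ^ 2 := by
    rw [two_mul, ← two_nsmul]
    exact (two_nsmul_sum_filter_fst_lt (fun p => (v p.1 - v p.2) ^ 2)
      (fun p => by simp only [Prod.fst_swap, Prod.snd_swap]; ring) (fun i => by simp)).trans
      (Fintype.sum_prod_type_right _)
  have hS : δ * ρ ^ 2 * n ≤ 2 * S := by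
    calc δ * ρ ^ 2 * n = ∑ _j : Fin n, δ * ρ ^ 2 * (n / n) := by
          rw [sum_const, card_univ, Fintype.card_fin, nsmul_eq_mul, mul_left_comm,
            ← mul_div_assoc, mul_self_div_self]
      _ ≤ 2 * S := hpairs ▸ sum_le_sum fun j _ => hrow j
  rw [Real.le_sqrt (by positivity) (by positivity), div_pow, mul_pow, mul_pow, mul_pow,
    Real.sq_sqrt n.cast_nonneg, Real.sq_sqrt zero_le_two]
  have hδ_small : 0 ≤ δ * ρ ^ 2 * n * (16 - δ) :=
    mul_nonneg (by positivity) (by linarith)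
  nlinarith

theorem stmt18 {n : ℕ} (δ ρ : ℝ) (hδ : δ ∈ Set.Ioo (0:ℝ) 1) (hρ : ρ ∈ Set.Ioo (0:ℝ) 1)
    (v : EuclideanSpace ℝ (Fin n)) (hv : ‖v‖ = 1)
    (hcons : ∀ lam : ℝ,
      ((Finset.univ.filter (fun i : Fin n => |v i - lam| ≤ ρ / Real.sqrt n)).card : ℝ)
        < (1 - δ) * n) :
    δ * ρ * Real.sqrt n / (4 * Real.sqrt 2)
      ≤ Real.sqrt (∑ p ∈ Finset.univ.filter (fun p : Fin n × Fin n => p.1 < p.2),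
          (v p.1 - v p.2)^2) :=
  stmt18_general δ ρ hδ hρ v hcons
end
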